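/- There exists a hyperpath from p_0 to f in C(φ) containing the edge ({p_n}, {q_0}) if and only if the 3-SAT instance φ is satisfiable. -/

import Mathlib

/-- A directed hypergraph: finite vertex set, finite set of hyperedges,
each hyperedge `e = (T_e, H_e)` with tail `T_e ⊆ V`, head `H_e ⊆ V \ T_e`. -/
structure DiHypergraph (V : Type*) [DecidableEq V] where
  verts : Finset V
  edges : Finset (Finset V × Finset V)
  tail_sub : ∀ e ∈ edges, e.1 ⊆ verts
  head_sub : ∀ e ∈ edges, e.2 ⊆ verts
  disj : ∀ e ∈ edges, Disjoint e.1 e.2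

variable {V : Type*} [DecidableEq V]

/-- Subhypergraph relation. -/
def Subhg (H' H : DiHypergraph V) : Prop :=
  H'.verts ⊆ H.verts ∧ H'.edges ⊆ H.edges

/-- Union of the heads of a list of hyperedges. -/
def headsUnion (L : List (Finset V × Finset V)) : Finset V :=
  L.foldr (fun e acc => e.2 ∪ acc) ∅

/-- The hyperedges of `H'` can be ordered `⟨e_1, …, e_k⟩` so that
`T(e_i) ⊆ {s} ∪ H(e_1) ∪ ⋯ ∪ H(e_{i-1})` and `d ∈ H(e_k)`. -/
def HasOrdering (H' : DiHypergraph V) (s d : V) : Prop :=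
  ∃ L : List (Finset V × Finset V), L.Nodup ∧ L.toFinset = H'.edges ∧
    (∀ i : Fin L.length, (L.get i).1 ⊆ insert s (headsUnion (L.take (i : ℕ)))) ∧
    ∃ e, L.getLast? = some e ∧ d ∈ e.2

/-- A hyperpath from `s` to `d` in `H` is a subhypergraph of `H`, minimal with
respect to deletion of vertices and edges, admitting a valid edge ordering. -/
def IsHyperpath (H : DiHypergraph V) (s d : V) (H' : DiHypergraph V) : Prop :=
  Subhg H' H ∧ HasOrdering H' s d ∧
    ∀ H'' : DiHypergraph V, Subhg H'' H' → HasOrdering H'' s d → H'' = H'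

/-- `PathFrom H s d vs es` : `vs` and `es` form a (simple graph-style) path
`(v₁ = s, e₁, v₂, …, e_q, v_{q+1} = d)` with `vᵢ ∈ T(eᵢ)`, `v_{i+1} ∈ H(eᵢ)`,
all edges taken from `H`. -/
inductive PathFrom (H : DiHypergraph V) : V → V → List V → List (Finset V × Finset V) → Prop
  | single {s d : V} {e : Finset V × Finset V} :
      e ∈ H.edges → s ∈ e.1 → d ∈ e.2 → PathFrom H s d [s, d] [e]
  | cons {s v d : V} {vs : List V} {es : List (Finset V × Finset V)}
      {e : Finset V × Finset V} :
      e ∈ H.edges → s ∈ e.1 → v ∈ e.2 → PathFrom H v d vs es →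
      PathFrom H s d (s :: vs) (e :: es)

/-! ### The 3-SAT construction `C(φ)`

A 3-SAT instance with `n` variables and `m` clauses is `φ : Fin m → Fin 3 → Fin n × Bool`:
literal `j` of clause `i` is `(v, sign)`, positive if `sign = true`. -/

/-- An assignment `σ` satisfies the 3-SAT instance `φ`. -/
def SatAssign {n m : ℕ} (φ : Fin m → Fin 3 → Fin n × Bool) (σ : Fin n → Bool) : Prop :=
  ∀ i : Fin m, ∃ j : Fin 3, σ (φ i j).1 = (φ i j).2

/-- Vertices of the construction `C(φ)`. -/
inductive Vtx (n m : ℕ) where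
  | p (i : Fin (n + 1))
  | q0
  | q (i : Fin m) (j : Fin 3)
  | f
deriving DecidableEq, Fintype

/-- The edge assigning variable `v_i` the value `b`: tail `{p_{i-1}}`, head
`{p_i}` together with the `q`-vertices of the clause literals blocked by the
assignment (the occurrences of `v_i` with sign `!b`). -/
def varEdge {n m : ℕ} (φ : Fin m → Fin 3 → Fin n × Bool) (i : Fin n) (b : Bool) :
    Finset (Vtx n m) × Finset (Vtx n m) :=
  ({Vtx.p i.castSucc},
    insert (Vtx.p i.succ)
      (((Finset.univ : Finset (Fin m × Fin 3)).filter
          (fun xy => φ xy.1 xy.2 = (i, !b))).image fun xy => Vtx.q xy.1 xy.2))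

/-- The head of the clause edges for clause `i`: the three `q`-vertices of
clause `i+1`, or `{f}` for the last clause. -/
def nextQ {n m : ℕ} (i : Fin m) : Finset (Vtx n m) :=
  if h : (i : ℕ) + 1 < m then
    {Vtx.q ⟨(i : ℕ) + 1, h⟩ 0, Vtx.q ⟨(i : ℕ) + 1, h⟩ 1, Vtx.q ⟨(i : ℕ) + 1, h⟩ 2}
  else {Vtx.f}

/-- The edge choosing literal `j` to satisfy clause `i`. -/
def clauseEdge {n m : ℕ} (i : Fin m) (j : Fin 3) :
    Finset (Vtx n m) × Finset (Vtx n m) :=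
  ({Vtx.q i j}, nextQ i)

/-- The forced edge `({p_n}, {q_0})`. -/
def forcedEdge (n m : ℕ) : Finset (Vtx n m) × Finset (Vtx n m) :=
  ({Vtx.p (Fin.last n)}, {Vtx.q0})

/-- The connector edge `({q_0}, {q_{1,1}, q_{1,2}, q_{1,3}})`. -/
def q0Edge (n m : ℕ) : Finset (Vtx n m) × Finset (Vtx n m) :=
  ({Vtx.q0},
    if h : 0 < m then {Vtx.q ⟨0, h⟩ 0, Vtx.q ⟨0, h⟩ 1, Vtx.q ⟨0, h⟩ 2}
    else {Vtx.f})

/-- The construction `C(φ)`. -/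
def Cphi {n m : ℕ} (φ : Fin m → Fin 3 → Fin n × Bool) : DiHypergraph (Vtx n m) where
  verts := Finset.univ
  edges :=
    ((Finset.univ : Finset (Fin n × Bool)).image fun ib => varEdge φ ib.1 ib.2) ∪
    ((Finset.univ : Finset (Fin m × Fin 3)).image fun ij => clauseEdge ij.1 ij.2) ∪
    {forcedEdge n m, q0Edge n m}
  tail_sub := fun _ _ => Finset.subset_univ _
  head_sub := fun _ _ => Finset.subset_univ _
  disj := by
    intro e he
    simp only [Finset.mem_union, Finset.mem_image, Finset.mem_univ, true_and,
      Finset.mem_insert, Finset.mem_singleton, Prod.exists] at he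
    rcases he with (⟨i, b, rfl⟩ | ⟨i, j, rfl⟩) | (rfl | rfl)
    · simp only [varEdge, Finset.disjoint_singleton_left, Finset.mem_insert,
        Finset.mem_image, Finset.mem_filter, Finset.mem_univ, true_and, Prod.exists]
      rintro (h | ⟨x, y, _, h⟩)
      · exact absurd (Vtx.p.injEq .. ▸ congrArg id h)
          (by simpa using (Fin.castSucc_lt_succ : i.castSucc < i.succ).ne)
      · cases h
    · simp only [clauseEdge, nextQ, Finset.disjoint_singleton_left]
      split
      · simp only [Finset.mem_insert, Finset.mem_singleton]
        rintro (h | h | h) <;>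
          { injection h with h1 h2
            exact absurd (congrArg Fin.val h1) (by simp) }
      · simp
    · simp [forcedEdge]
    · simp only [q0Edge, Finset.disjoint_singleton_left]
      split <;> simp

/-! ### Auxiliary general lemmas -/

section General

variable {V : Type*} [DecidableEq V]

theorem mem_of_getLast?' {α} (L : List α) (e : α) (h : L.getLast? = some e) : e ∈ L := by
  cases L with
  | nil => simp at h
  | cons a t =>
    rw [List.getLast?_eq_getLast (l := a :: t) (by simp)] at h
    exact Option.some_inj.1 h ▸ List.getLast_mem (l := a :: t) (by simp)

@[simp] theorem headsUnion_nil : headsUnion ([] : List (Finset V × Finset V)) = ∅ := rfl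

@[simp] theorem headsUnion_cons (e : Finset V × Finset V) (t : List (Finset V × Finset V)) :
    headsUnion (e :: t) = e.2 ∪ headsUnion t := rfl

theorem headsUnion_append (L₁ L₂ : List (Finset V × Finset V)) :
    headsUnion (L₁ ++ L₂) = headsUnion L₁ ∪ headsUnion L₂ := by
  induction L₁ with
  | nil => simp
  | cons e t ih => simp [ih, Finset.union_assoc]

theorem mem_headsUnion {L : List (Finset V × Finset V)} {x : V} :
    x ∈ headsUnion L ↔ ∃ e ∈ L, x ∈ e.2 := by
  induction L with
  | nil => simp
  | cons e t ih => simp [ih]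

/-- A recursively-phrased validity predicate for edge orderings. -/
def Valid (acc : Finset V) : List (Finset V × Finset V) → Prop
  | [] => True
  | e :: t => e.1 ⊆ acc ∧ Valid (acc ∪ e.2) t

theorem Valid.mono {acc acc' : Finset V} {L : List (Finset V × Finset V)}
    (h : acc ⊆ acc') (hv : Valid acc L) : Valid acc' L := by
  induction L generalizing acc acc' with
  | nil => trivial
  | cons e t ih =>
    exact ⟨hv.1.trans h, ih (Finset.union_subset_union h (Finset.Subset.refl _)) hv.2⟩

theorem Valid.append {acc : Finset V} {L₁ L₂ : List (Finset V × Finset V)}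
    (h₁ : Valid acc L₁) (h₂ : Valid (acc ∪ headsUnion L₁) L₂) : Valid acc (L₁ ++ L₂) := by
  induction L₁ generalizing acc with
  | nil => simpa using h₂.mono (by simp)
  | cons e t ih =>
    refine ⟨h₁.1, ih h₁.2 (h₂.mono ?_)⟩
    simp [Finset.union_assoc]

theorem valid_of_forall {acc : Finset V} {L : List (Finset V × Finset V)}
    (h : ∀ e ∈ L, e.1 ⊆ acc) : Valid acc L := by
  induction L generalizing acc with
  | nil => trivial
  | cons e t ih =>
    exact ⟨h e (by simp), ih (fun e' he' => (h e' (by simp [he'])).trans Finset.subset_union_left)⟩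

theorem Valid.get {acc : Finset V} {L : List (Finset V × Finset V)} (hv : Valid acc L) :
    ∀ i : Fin L.length, (L.get i).1 ⊆ acc ∪ headsUnion (L.take (i : ℕ)) := by
  induction L generalizing acc with
  | nil => exact fun i => absurd i.2 (by simp)
  | cons e t ih =>
    intro i
    refine Fin.cases ?_ (fun j => ?_) i
    · simpa using hv.1
    · have := ih hv.2 j
      simpa [List.take_succ_cons, Finset.union_assoc] using this

theorem hasOrdering_of (K : DiHypergraph V) (s d : V) (L : List (Finset V × Finset V))
    (hnd : L.Nodup) (hfin : L.toFinset = K.edges) (hval : Valid {s} L)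
    (hlast : ∃ e, L.getLast? = some e ∧ d ∈ e.2) : HasOrdering K s d := by
  refine ⟨L, hnd, hfin, fun i => (hval.get i).trans ?_, hlast⟩
  rw [Finset.insert_eq]

theorem hasOrdering_reach {K : DiHypergraph V} {s d : V} (h : HasOrdering K s d) :
    ∀ e ∈ K.edges, ∀ x ∈ e.1, x = s ∨ ∃ e' ∈ K.edges, x ∈ e'.2 := by
  obtain ⟨L, -, hfin, cond, -⟩ := h
  intro e he x hx
  rw [← hfin, List.mem_toFinset] at he
  obtain ⟨i, rfl⟩ := List.mem_iff_get.1 he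
  have := cond i hx
  rcases Finset.mem_insert.1 this with h | h
  · exact Or.inl h
  · obtain ⟨e', he', hx'⟩ := mem_headsUnion.1 h
    exact Or.inr ⟨e', by rw [← hfin, List.mem_toFinset]; exact List.take_subset _ _ he', hx'⟩

theorem hasOrdering_last {K : DiHypergraph V} {s d : V} (h : HasOrdering K s d) :
    ∃ e ∈ K.edges, d ∈ e.2 := by
  obtain ⟨L, -, hfin, -, e, hl, hd⟩ := h
  exact ⟨e, by rw [← hfin, List.mem_toFinset]; exact mem_of_getLast?' _ _ hl, hd⟩

theorem DiHypergraph.ext' {H₁ H₂ : DiHypergraph V} (hv : H₁.verts = H₂.verts)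
    (he : H₁.edges = H₂.edges) : H₁ = H₂ := by
  cases H₁; cases H₂; simp_all

end General

/-! ### Membership and shape lemmas for the construction -/

section Shapes

variable {n m : ℕ} {φ : Fin m → Fin 3 → Fin n × Bool}

theorem varEdge_fst (v : Fin n) (b : Bool) :
    (varEdge φ v b).1 = {Vtx.p v.castSucc} := rfl

theorem clauseEdge_fst (i : Fin m) (j : Fin 3) :
    (clauseEdge (n := n) i j).1 = {Vtx.q i j} := rfl

theorem p_mem_varEdge_head {w : Fin (n+1)} {v : Fin n} {b : Bool} :
    Vtx.p w ∈ (varEdge φ v b).2 ↔ w = v.succ := by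
  simp [varEdge]

theorem q_mem_varEdge_head {x : Fin m} {y : Fin 3} {v : Fin n} {b : Bool} :
    Vtx.q x y ∈ (varEdge φ v b).2 ↔ φ x y = (v, !b) := by
  simp only [varEdge, Finset.mem_insert, Finset.mem_image, Finset.mem_filter,
    Finset.mem_univ, true_and, Prod.exists]
  constructor
  · rintro (h | ⟨a, c, h1, h2⟩)
    · exact absurd h (by simp)
    · injection h2 with h2a h2b; subst h2a; subst h2b; exact h1
  · intro h; exact Or.inr ⟨x, y, h, rfl⟩

theorem q0_not_mem_varEdge_head {v : Fin n} {b : Bool} :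
    Vtx.q0 ∉ (varEdge φ v b).2 := by simp [varEdge]

theorem f_not_mem_varEdge_head {v : Fin n} {b : Bool} :
    (Vtx.f : Vtx n m) ∉ (varEdge φ v b).2 := by simp [varEdge]

theorem q_mem_nextQ {x : Fin m} {y : Fin 3} {i : Fin m} :
    Vtx.q x y ∈ nextQ (n := n) i ↔ (x : ℕ) = (i : ℕ) + 1 := by
  unfold nextQ
  split
  · rename_i h
    simp only [Finset.mem_insert, Finset.mem_singleton]
    constructor
    · rintro (h' | h' | h') <;> (injection h' with h1 h2; exact congrArg Fin.val h1)
    · intro h'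
      have hx : x = ⟨(i : ℕ) + 1, h⟩ := Fin.ext h'
      subst hx
      fin_cases y <;> simp
  · rename_i h
    simp only [Finset.mem_singleton]
    constructor
    · intro h'; exact absurd h' (by simp)
    · intro h'; exact absurd (h' ▸ x.isLt) h

theorem f_mem_nextQ {i : Fin m} :
    (Vtx.f : Vtx n m) ∈ nextQ (n := n) i ↔ ¬((i : ℕ) + 1 < m) := by
  unfold nextQ
  split <;> rename_i h <;> simp [h]

theorem p_not_mem_nextQ {w : Fin (n+1)} {i : Fin m} :
    Vtx.p w ∉ nextQ (n := n) i := by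
  unfold nextQ; split <;> simp

theorem q0_not_mem_nextQ {i : Fin m} :
    (Vtx.q0 : Vtx n m) ∉ nextQ (n := n) i := by
  unfold nextQ; split <;> simp

theorem q_mem_q0Edge_head {x : Fin m} {y : Fin 3} :
    Vtx.q x y ∈ (q0Edge n m).2 ↔ (x : ℕ) = 0 := by
  unfold q0Edge
  simp only
  split
  · rename_i h
    simp only [Finset.mem_insert, Finset.mem_singleton]
    constructor
    · rintro (h' | h' | h') <;> (injection h' with h1 h2; exact congrArg Fin.val h1)
    · intro h'
      have hx : x = ⟨0, h⟩ := Fin.ext h'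
      subst hx
      fin_cases y <;> simp
  · exact absurd x.isLt (by omega)

theorem f_mem_q0Edge_head : (Vtx.f : Vtx n m) ∈ (q0Edge n m).2 ↔ m = 0 := by
  unfold q0Edge
  simp only
  split <;> rename_i h <;> simp <;> omega

theorem p_not_mem_q0Edge_head {w : Fin (n+1)} : Vtx.p w ∉ (q0Edge n m).2 := by
  unfold q0Edge; simp only; split <;> simp

theorem q0_not_mem_q0Edge_head : (Vtx.q0 : Vtx n m) ∉ (q0Edge n m).2 := by
  unfold q0Edge; simp only; split <;> simp

theorem mem_forcedEdge_head {x : Vtx n m} : x ∈ (forcedEdge n m).2 ↔ x = Vtx.q0 := by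
  simp [forcedEdge]

theorem mem_Cphi_edges {e : Finset (Vtx n m) × Finset (Vtx n m)} :
    e ∈ (Cphi φ).edges ↔ (∃ v b, e = varEdge φ v b) ∨ (∃ i j, e = clauseEdge (n := n) i j) ∨
      e = forcedEdge n m ∨ e = q0Edge n m := by
  simp only [Cphi, Finset.mem_union, Finset.mem_image, Finset.mem_univ, true_and,
    Finset.mem_insert, Finset.mem_singleton, Prod.exists]
  constructor
  · rintro ((⟨v, b, rfl⟩ | ⟨i, j, rfl⟩) | (rfl | rfl))
    · exact Or.inl ⟨v, b, rfl⟩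
    · exact Or.inr (Or.inl ⟨i, j, rfl⟩)
    · exact Or.inr (Or.inr (Or.inl rfl))
    · exact Or.inr (Or.inr (Or.inr rfl))
  · rintro (⟨v, b, rfl⟩ | ⟨i, j, rfl⟩ | rfl | rfl)
    · exact Or.inl (Or.inl ⟨v, b, rfl⟩)
    · exact Or.inl (Or.inr ⟨i, j, rfl⟩)
    · exact Or.inr (Or.inl rfl)
    · exact Or.inr (Or.inr rfl)

theorem varEdge_idx_eq {v v' : Fin n} {b b' : Bool}
    (h : varEdge φ v b = varEdge φ v' b') : v = v' := by
  have h1 : (varEdge φ v b).1 = (varEdge φ v' b').1 := by rw [h]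
  rw [varEdge_fst, varEdge_fst, Finset.singleton_inj] at h1
  injection h1 with h2
  exact Fin.castSucc_injective n h2

theorem clauseEdge_inj {i i' : Fin m} {j j' : Fin 3}
    (h : clauseEdge (n := n) i j = clauseEdge (n := n) i' j') : i = i' ∧ j = j' := by
  have h1 : (clauseEdge (n := n) i j).1 = (clauseEdge (n := n) i' j').1 := by rw [h]
  rw [clauseEdge_fst, clauseEdge_fst, Finset.singleton_inj] at h1
  injection h1 with h2 h3
  exact ⟨h2, h3⟩

theorem varEdge_ne_clauseEdge {v : Fin n} {b : Bool} {i : Fin m} {j : Fin 3} :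
    varEdge φ v b ≠ clauseEdge (n := n) i j := by
  intro h
  have h1 : (varEdge φ v b).1 = (clauseEdge (n := n) i j).1 := by rw [h]
  rw [varEdge_fst, clauseEdge_fst, Finset.singleton_inj] at h1
  cases h1

theorem varEdge_ne_forcedEdge {v : Fin n} {b : Bool} :
    varEdge φ v b ≠ forcedEdge n m := by
  intro h
  have h1 : (varEdge φ v b).1 = (forcedEdge n m).1 := by rw [h]
  rw [varEdge_fst, forcedEdge, Finset.singleton_inj] at h1
  injection h1 with h2
  have := congrArg Fin.val h2
  simp [Fin.last] at this
  omega

theorem varEdge_ne_q0Edge {v : Fin n} {b : Bool} :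
    varEdge φ v b ≠ q0Edge n m := by
  intro h
  have h1 : (varEdge φ v b).1 = (q0Edge n m).1 := by rw [h]
  rw [varEdge_fst, q0Edge, Finset.singleton_inj] at h1
  cases h1

theorem clauseEdge_ne_forcedEdge {i : Fin m} {j : Fin 3} :
    clauseEdge (n := n) i j ≠ forcedEdge n m := by
  intro h
  have h1 : (clauseEdge (n := n) i j).1 = (forcedEdge n m).1 := by rw [h]
  rw [clauseEdge_fst, forcedEdge, Finset.singleton_inj] at h1
  cases h1

theorem clauseEdge_ne_q0Edge {i : Fin m} {j : Fin 3} :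
    clauseEdge (n := n) i j ≠ q0Edge n m := by
  intro h
  have h1 : (clauseEdge (n := n) i j).1 = (q0Edge n m).1 := by rw [h]
  rw [clauseEdge_fst, q0Edge, Finset.singleton_inj] at h1
  cases h1

theorem forcedEdge_ne_q0Edge : forcedEdge n m ≠ q0Edge n m := by
  intro h
  have h1 : (forcedEdge n m).1 = (q0Edge n m).1 := by rw [h]
  rw [forcedEdge, q0Edge, Finset.singleton_inj] at h1
  cases h1

end Shapes

/-! ### Explicit edge lists -/

section Lists

/-- The list of the variable edges (for variables of index `< k`) present in `E`,
in order of variable index. -/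
noncomputable def varListE {n m : ℕ} (φ : Fin m → Fin 3 → Fin n × Bool)
    (E : Finset (Finset (Vtx n m) × Finset (Vtx n m))) :
    ℕ → List (Finset (Vtx n m) × Finset (Vtx n m))
  | 0 => []
  | k + 1 =>
    varListE φ E k ++
      (if h : k < n then
        (E.filter (fun e => e = varEdge φ ⟨k, h⟩ false ∨ e = varEdge φ ⟨k, h⟩ true)).toList
      else [])

/-- The chain of clause edges `clauseEdge ⟨k⟩ (t k)` for `k0 ≤ k < min m (k0 + c)`. -/
def clauseListT (n m : ℕ) (t : ℕ → Fin 3) :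
    ℕ → ℕ → List (Finset (Vtx n m) × Finset (Vtx n m))
  | _, 0 => []
  | k0, c + 1 =>
    (if h : k0 < m then [clauseEdge (n := n) ⟨k0, h⟩ (t k0)] else []) ++
      clauseListT n m t (k0 + 1) c

variable {n m : ℕ} {φ : Fin m → Fin 3 → Fin n × Bool}
  {E : Finset (Finset (Vtx n m) × Finset (Vtx n m))} {t : ℕ → Fin 3}

theorem mem_varListE {k : ℕ} {e : Finset (Vtx n m) × Finset (Vtx n m)} :
    e ∈ varListE φ E k ↔
      ∃ v : Fin n, (v : ℕ) < k ∧ (e = varEdge φ v false ∨ e = varEdge φ v true) ∧ e ∈ E := by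
  induction k with
  | zero => simp [varListE]
  | succ k ih =>
    rw [varListE, List.mem_append, ih]
    by_cases h : k < n
    · rw [dif_pos h]
      simp only [Finset.mem_toList, Finset.mem_filter]
      constructor
      · rintro (⟨v, hv, hs, hE⟩ | ⟨hE, hs⟩)
        · exact ⟨v, by omega, hs, hE⟩
        · exact ⟨⟨k, h⟩, Nat.lt_succ_self k, hs, hE⟩
      · rintro ⟨v, hv, hs, hE⟩
        rcases Nat.lt_succ_iff_lt_or_eq.1 hv with hv' | hv'
        · exact Or.inl ⟨v, hv', hs, hE⟩
        · right
          have hvk : v = ⟨k, h⟩ := Fin.ext hv'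
          subst hvk
          exact ⟨hE, hs⟩
    · rw [dif_neg h]
      constructor
      · rintro (⟨v, hv, hs, hE⟩ | h')
        · exact ⟨v, by omega, hs, hE⟩
        · simp at h'
      · rintro ⟨v, hv, hs, hE⟩
        exact Or.inl ⟨v, by have := v.isLt; omega, hs, hE⟩

theorem varListE_subset {k : ℕ} : ∀ e ∈ varListE φ E k, e ∈ E := by
  intro e he
  obtain ⟨v, -, -, hE⟩ := mem_varListE.1 he
  exact hE

theorem nodup_varListE {k : ℕ} : (varListE φ E k).Nodup := by
  induction k with
  | zero => simp [varListE]
  | succ k ih =>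
    rw [varListE]
    by_cases h : k < n
    · rw [dif_pos h]
      refine List.nodup_append.2 ⟨ih, Finset.nodup_toList _, ?_⟩
      rintro e he _ he' rfl
      obtain ⟨v, hv, hs, -⟩ := mem_varListE.1 he
      rw [Finset.mem_toList, Finset.mem_filter] at he'
      rcases hs with rfl | rfl <;> rcases he'.2 with h' | h' <;>
        exact absurd (congrArg Fin.val (varEdge_idx_eq h')) (by simp; omega)
    · rw [dif_neg h]
      simpa using ih

theorem p_mem_insert_headsUnion_varListE
    (hfull : ∀ v : Fin n, ∃ b, varEdge φ v b ∈ E)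
    {k : ℕ} {w : Fin (n + 1)} (hw : (w : ℕ) ≤ k) :
    Vtx.p w ∈ insert (Vtx.p (0 : Fin (n + 1))) (headsUnion (varListE φ E k)) := by
  rcases Nat.eq_zero_or_pos (w : ℕ) with h0 | h0
  · have : w = 0 := Fin.ext (by simpa using h0)
    subst this
    exact Finset.mem_insert_self _ _
  · have hj : (w : ℕ) - 1 < n := by have := w.isLt; omega
    obtain ⟨b, hb⟩ := hfull ⟨(w : ℕ) - 1, hj⟩
    refine Finset.mem_insert_of_mem (mem_headsUnion.2 ⟨varEdge φ ⟨(w : ℕ) - 1, hj⟩ b, ?_, ?_⟩)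
    · refine mem_varListE.2 ⟨⟨(w : ℕ) - 1, hj⟩, by simp; omega, ?_, hb⟩
      rcases b with _ | _
      exacts [Or.inl rfl, Or.inr rfl]
    · rw [p_mem_varEdge_head]
      refine Fin.ext ?_
      rw [Fin.val_succ]
      simp
      omega

theorem valid_varListE (hfull : ∀ v : Fin n, ∃ b, varEdge φ v b ∈ E) :
    ∀ k, Valid {Vtx.p (0 : Fin (n + 1))} (varListE φ E k) := by
  intro k
  induction k with
  | zero => exact trivial
  | succ k ih =>
    rw [varListE]
    by_cases h : k < n
    · rw [dif_pos h]
      refine Valid.append ih (valid_of_forall ?_)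
      intro e he
      rw [Finset.mem_toList, Finset.mem_filter] at he
      have htail : e.1 = {Vtx.p ((⟨k, h⟩ : Fin n).castSucc)} := by
        rcases he.2 with rfl | rfl <;> rfl
      rw [htail, Finset.singleton_subset_iff]
      exact p_mem_insert_headsUnion_varListE hfull (by simp)
    · rw [dif_neg h, List.append_nil]
      exact ih

theorem mem_clauseListT {k0 c : ℕ} {e : Finset (Vtx n m) × Finset (Vtx n m)} :
    e ∈ clauseListT n m t k0 c ↔
      ∃ (k : ℕ) (h : k < m), k0 ≤ k ∧ k < k0 + c ∧ e = clauseEdge ⟨k, h⟩ (t k) := by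
  induction c generalizing k0 with
  | zero =>
    simp only [clauseListT, List.not_mem_nil, false_iff]
    rintro ⟨k, hk, h1, h2, -⟩
    omega
  | succ c ih =>
    rw [clauseListT, List.mem_append, ih]
    by_cases h : k0 < m
    · rw [dif_pos h]
      simp only [List.mem_singleton]
      constructor
      · rintro (rfl | ⟨k, hk, h1, h2, rfl⟩)
        · exact ⟨k0, h, le_rfl, by omega, rfl⟩
        · exact ⟨k, hk, by omega, by omega, rfl⟩
      · rintro ⟨k, hk, h1, h2, rfl⟩
        rcases eq_or_lt_of_le h1 with rfl | h1'
        · exact Or.inl rfl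
        · exact Or.inr ⟨k, hk, by omega, by omega, rfl⟩
    · rw [dif_neg h]
      simp only [List.not_mem_nil, false_or]
      constructor <;>
        · rintro ⟨k, hk, h1, h2, rfl⟩
          exact absurd hk (by omega)

theorem nodup_clauseListT : ∀ c k0, (clauseListT n m t k0 c).Nodup := by
  intro c
  induction c with
  | zero => intro k0; simp [clauseListT]
  | succ c ih =>
    intro k0
    rw [clauseListT]
    by_cases h : k0 < m
    · rw [dif_pos h]
      refine List.nodup_append.2 ⟨List.nodup_singleton _, ih _, ?_⟩
      rintro e he _ he' rfl
      rw [List.mem_singleton] at he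
      subst he
      obtain ⟨k, hk, h1, h2, he⟩ := mem_clauseListT.1 he'
      have h3 := congrArg Fin.val (clauseEdge_inj he).1
      simp at h3
      omega
    · rw [dif_neg h]
      simpa using ih _

theorem valid_clauseListT :
    ∀ c k0 (acc : Finset (Vtx n m)), (∀ h : k0 < m, Vtx.q ⟨k0, h⟩ (t k0) ∈ acc) →
      Valid acc (clauseListT n m t k0 c) := by
  intro c
  induction c with
  | zero => intros; exact trivial
  | succ c ih =>
    intro k0 acc hacc
    rw [clauseListT]
    by_cases h : k0 < m
    · rw [dif_pos h]
      refine ⟨?_, ?_⟩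
      · rw [clauseEdge_fst, Finset.singleton_subset_iff]
        exact hacc h
      · refine ih (k0 + 1) _ ?_
        intro h'
        exact Finset.mem_union_right _ (q_mem_nextQ.2 (by simp))
    · rw [dif_neg h, List.nil_append]
      exact ih (k0 + 1) acc (fun h' => absurd h' (by omega))

theorem clauseListT_eq_nil : ∀ c k0, m ≤ k0 → clauseListT n m t k0 c = [] := by
  intro c
  induction c with
  | zero => intros; rfl
  | succ c ih =>
    intro k0 h
    rw [clauseListT, dif_neg (by omega), List.nil_append]
    exact ih _ (by omega)

theorem getLast?_clauseListT :
    ∀ c k0, k0 < m → m ≤ k0 + c → ∃ h : m - 1 < m,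
      (clauseListT n m t k0 c).getLast? = some (clauseEdge (n := n) ⟨m - 1, h⟩ (t (m - 1))) := by
  intro c
  induction c with
  | zero => intro k0 h1 h2; omega
  | succ c ih =>
    intro k0 h1 h2
    rw [clauseListT, dif_pos h1]
    by_cases h3 : k0 + 1 < m
    · obtain ⟨h4, h5⟩ := ih (k0 + 1) h3 (by omega)
      refine ⟨h4, ?_⟩
      rw [List.getLast?_append_of_ne_nil]
      · exact h5
      · intro hnil
        rw [hnil] at h5
        simp at h5
    · have hk : k0 = m - 1 := by omega
      subst hk
      rw [clauseListT_eq_nil c (m - 1 + 1) (by omega), List.append_nil]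
      exact ⟨by omega, rfl⟩

end Lists

/-! ### Classification of edges by head membership -/

section Classify

variable {n m : ℕ} {φ : Fin m → Fin 3 → Fin n × Bool}

theorem head_p_classify {e : Finset (Vtx n m) × Finset (Vtx n m)} (he : e ∈ (Cphi φ).edges)
    {w : Fin (n + 1)} (hw : Vtx.p w ∈ e.2) : ∃ v b, e = varEdge φ v b ∧ w = v.succ := by
  rcases mem_Cphi_edges.1 he with ⟨v, b, rfl⟩ | ⟨i, j, rfl⟩ | rfl | rfl
  · exact ⟨v, b, rfl, p_mem_varEdge_head.1 hw⟩
  · exact absurd hw p_not_mem_nextQ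
  · exact absurd (mem_forcedEdge_head.1 hw) (by simp)
  · exact absurd hw p_not_mem_q0Edge_head

theorem head_q0_classify {e : Finset (Vtx n m) × Finset (Vtx n m)} (he : e ∈ (Cphi φ).edges)
    (hw : (Vtx.q0 : Vtx n m) ∈ e.2) : e = forcedEdge n m := by
  rcases mem_Cphi_edges.1 he with ⟨v, b, rfl⟩ | ⟨i, j, rfl⟩ | rfl | rfl
  · exact absurd hw q0_not_mem_varEdge_head
  · exact absurd hw q0_not_mem_nextQ
  · rfl
  · exact absurd hw q0_not_mem_q0Edge_head

theorem head_q_classify {e : Finset (Vtx n m) × Finset (Vtx n m)} (he : e ∈ (Cphi φ).edges)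
    {x : Fin m} {y : Fin 3} (hw : Vtx.q x y ∈ e.2) :
    (∃ v b, e = varEdge φ v b ∧ φ x y = (v, !b)) ∨
      (∃ i j, e = clauseEdge (n := n) i j ∧ (x : ℕ) = (i : ℕ) + 1) ∨
      (e = q0Edge n m ∧ (x : ℕ) = 0) := by
  rcases mem_Cphi_edges.1 he with ⟨v, b, rfl⟩ | ⟨i, j, rfl⟩ | rfl | rfl
  · exact Or.inl ⟨v, b, rfl, q_mem_varEdge_head.1 hw⟩
  · exact Or.inr (Or.inl ⟨i, j, rfl, q_mem_nextQ.1 hw⟩)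
  · exact absurd (mem_forcedEdge_head.1 hw) (by simp)
  · exact Or.inr (Or.inr ⟨rfl, q_mem_q0Edge_head.1 hw⟩)

theorem head_f_classify {e : Finset (Vtx n m) × Finset (Vtx n m)} (he : e ∈ (Cphi φ).edges)
    (hw : (Vtx.f : Vtx n m) ∈ e.2) :
    (∃ i j, e = clauseEdge (n := n) i j ∧ ¬((i : ℕ) + 1 < m)) ∨ (e = q0Edge n m ∧ m = 0) := by
  rcases mem_Cphi_edges.1 he with ⟨v, b, rfl⟩ | ⟨i, j, rfl⟩ | rfl | rfl
  · exact absurd hw f_not_mem_varEdge_head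
  · exact Or.inl ⟨i, j, rfl, f_mem_nextQ.1 hw⟩
  · exact absurd (mem_forcedEdge_head.1 hw) (by simp)
  · exact Or.inr ⟨rfl, f_mem_q0Edge_head.1 hw⟩

/-- If a minimal subhypergraph contains the forced edge, all variable edges, a chain of
clause edges from `k0` to the end, and a variable edge feeding the tail of the bottom of
the chain, we derive a contradiction: the forced edge would be superfluous. -/
theorem finish_contra (φ : Fin m → Fin 3 → Fin n × Bool) (H' : DiHypergraph (Vtx n m))
    (hmin : ∀ H'', Subhg H'' H' → HasOrdering H'' (Vtx.p 0) Vtx.f → H'' = H')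
    (hforced : forcedEdge n m ∈ H'.edges)
    (hfull : ∀ v : Fin n, ∃ b, varEdge φ v b ∈ H'.edges)
    (t : ℕ → Fin 3) (k0 : ℕ) (hk0 : k0 < m)
    (hchain : ∀ k, k0 ≤ k → ∀ h : k < m, clauseEdge (n := n) ⟨k, h⟩ (t k) ∈ H'.edges)
    (v0 : Fin n) (b0 : Bool) (hv0 : varEdge φ v0 b0 ∈ H'.edges)
    (hq : Vtx.q ⟨k0, hk0⟩ (t k0) ∈ (varEdge φ v0 b0).2) : False := by
  set L' := varListE φ H'.edges n ++ clauseListT n m t k0 (m - k0) with hL'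
  have hsubE : ∀ e ∈ L', e ∈ H'.edges := by
    intro e he
    rcases List.mem_append.1 he with h | h
    · exact varListE_subset e h
    · obtain ⟨k, hk, h1, -, rfl⟩ := mem_clauseListT.1 h
      exact hchain k h1 hk
  set K : DiHypergraph (Vtx n m) := {
    verts := H'.verts
    edges := L'.toFinset
    tail_sub := fun e he => H'.tail_sub e (hsubE e (List.mem_toFinset.1 he))
    head_sub := fun e he => H'.head_sub e (hsubE e (List.mem_toFinset.1 he))
    disj := fun e he => H'.disj e (hsubE e (List.mem_toFinset.1 he)) } with hK
  have hord : HasOrdering K (Vtx.p 0) Vtx.f := by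
    refine hasOrdering_of K _ _ L' ?_ rfl ?_ ?_
    · refine List.nodup_append.2 ⟨nodup_varListE, nodup_clauseListT _ _, ?_⟩
      rintro e he _ he' rfl
      obtain ⟨v, -, hs, -⟩ := mem_varListE.1 he
      obtain ⟨k, hk, -, -, he2⟩ := mem_clauseListT.1 he'
      rcases hs with h | h <;> (rw [he2] at h; exact varEdge_ne_clauseEdge h.symm)
    · refine Valid.append (valid_varListE hfull n) (valid_clauseListT _ _ _ ?_)
      intro h
      refine Finset.mem_union_right _
        (mem_headsUnion.2 ⟨varEdge φ v0 b0, mem_varListE.2 ⟨v0, v0.isLt, ?_, hv0⟩, hq⟩)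
      rcases b0 with _ | _
      exacts [Or.inl rfl, Or.inr rfl]
    · obtain ⟨hm1, hlast⟩ := getLast?_clauseListT (m - k0) k0 hk0 (by omega)
      refine ⟨clauseEdge ⟨m - 1, hm1⟩ (t (m - 1)), ?_, ?_⟩
      · rw [List.getLast?_append_of_ne_nil]
        · exact hlast
        · intro hnil
          rw [hnil] at hlast
          simp at hlast
      · refine f_mem_nextQ.2 ?_
        simp only [Fin.val_mk]
        omega
  have hKH : K = H' := hmin K ⟨Finset.Subset.refl _, fun e he => hsubE e (List.mem_toFinset.1 he)⟩ hord
  have hmem : forcedEdge n m ∈ L'.toFinset := by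
    have := hforced
    rw [← hKH] at this
    exact this
  rw [List.mem_toFinset] at hmem
  rcases List.mem_append.1 hmem with h | h
  · obtain ⟨v, -, hs, -⟩ := mem_varListE.1 h
    rcases hs with h' | h' <;> exact varEdge_ne_forcedEdge h'.symm
  · obtain ⟨k, hk, -, -, h'⟩ := mem_clauseListT.1 h
    exact clauseEdge_ne_forcedEdge h'.symm

end Classify

/-- There exists a hyperpath from `p_0` to `f` in `C(φ)` containing the forced
edge `({p_n}, {q_0})` if and only if `φ` is satisfiable. -/
theorem cphi_forced_hyperpath_iff_sat {n m : ℕ} (φ : Fin m → Fin 3 → Fin n × Bool) :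
    (∃ H' : DiHypergraph (Vtx n m),
      IsHyperpath (Cphi φ) (Vtx.p 0) Vtx.f H' ∧ forcedEdge n m ∈ H'.edges) ↔
    ∃ σ : Fin n → Bool, SatAssign φ σ := by
  constructor
  · rintro ⟨H', ⟨hsub, hord, hmin⟩, hforced⟩
    have hreach := hasOrdering_reach hord
    have hEC : H'.edges ⊆ (Cphi φ).edges := hsub.2
    -- every variable has some variable edge present (needed for the tail of the forced edge)
    have key : ∀ d k (h : k < n), k + d + 1 = n → ∃ b, varEdge φ ⟨k, h⟩ b ∈ H'.edges := by
      intro d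
      induction d with
      | zero =>
        intro k h hk
        have htail : Vtx.p (Fin.last n) ∈ (forcedEdge n m).1 := by simp [forcedEdge]
        rcases hreach _ hforced _ htail with h0 | ⟨e', he', hpe⟩
        · injection h0 with h0'
          have := congrArg Fin.val h0'
          simp [Fin.last] at this
          omega
        · obtain ⟨v, b, rfl, hw⟩ := head_p_classify (hEC he') hpe
          have hv : v = ⟨k, h⟩ := by
            have h2 := congrArg Fin.val hw
            simp [Fin.last, Fin.val_succ] at h2
            exact Fin.ext (by simp only [Fin.val_mk]; omega)
          exact ⟨b, hv ▸ he'⟩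
      | succ d ih =>
        intro k h hk
        obtain ⟨b, hb⟩ := ih (k + 1) (by omega) (by omega)
        have htail : Vtx.p ((⟨k + 1, by omega⟩ : Fin n).castSucc) ∈
            (varEdge φ ⟨k + 1, by omega⟩ b).1 := by
          rw [varEdge_fst]
          exact Finset.mem_singleton_self _
        rcases hreach _ hb _ htail with h0 | ⟨e', he', hpe⟩
        · injection h0 with h0'
          have := congrArg Fin.val h0'
          simp at this
        · obtain ⟨v, b', rfl, hw⟩ := head_p_classify (hEC he') hpe
          have hv : v = ⟨k, h⟩ := by
            have h2 := congrArg Fin.val hw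
            simp [Fin.val_succ] at h2
            exact Fin.ext (by simp only [Fin.val_mk]; omega)
          exact ⟨b', hv ▸ he'⟩
    have hfull : ∀ v : Fin n, ∃ b, varEdge φ v b ∈ H'.edges := by
      intro v
      have := key (n - (v : ℕ) - 1) (v : ℕ) v.isLt (by have := v.isLt; omega)
      rwa [Fin.eta] at this
    set σ : Fin n → Bool := fun v => decide (varEdge φ v true ∈ H'.edges) with hσ
    have hvar : ∀ v : Fin n, varEdge φ v (σ v) ∈ H'.edges := by
      intro v
      by_cases ht : varEdge φ v true ∈ H'.edges
      · have hv : σ v = true := by simp [hσ, ht]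
        rw [hv]
        exact ht
      · have hv : σ v = false := by simp [hσ, ht]
        obtain ⟨b, hb⟩ := hfull v
        rw [hv]
        rcases b with _ | _
        · exact hb
        · exact absurd hb ht
    refine ⟨σ, ?_⟩
    by_contra huns
    simp only [SatAssign] at huns
    push_neg at huns
    obtain ⟨i, hbad⟩ := huns
    have hbad' : ∀ j, σ (φ i j).1 = !(φ i j).2 := by
      intro j
      have := hbad j
      rcases h2 : (φ i j).2 <;> rcases h1 : σ (φ i j).1 <;> simp_all
    have hblock : ∀ j : Fin 3, Vtx.q i j ∈ (varEdge φ (φ i j).1 (σ (φ i j).1)).2 := by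
      intro j
      rw [q_mem_varEdge_head, hbad' j, Bool.not_not]
    have hm : 0 < m := i.pos
    have main : ∀ k, (i : ℕ) ≤ k → ∀ hkm : k < m, ∀ tt : ℕ → Fin 3,
        (∀ k', k ≤ k' → ∀ h : k' < m, clauseEdge (n := n) ⟨k', h⟩ (tt k') ∈ H'.edges) →
        False := by
      intro k
      induction k using Nat.strong_induction_on with
      | _ k ihk =>
        intro hik hkm tt hchain
        have hce := hchain k le_rfl hkm
        have htail : Vtx.q ⟨k, hkm⟩ (tt k) ∈ (clauseEdge (n := n) ⟨k, hkm⟩ (tt k)).1 := by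
          rw [clauseEdge_fst]
          exact Finset.mem_singleton_self _
        by_cases hki : k = (i : ℕ)
        · refine finish_contra φ H' hmin hforced hfull tt k hkm hchain
            (φ i (tt k)).1 (σ (φ i (tt k)).1) (hvar _) ?_
          have hik2 : (⟨k, hkm⟩ : Fin m) = i := Fin.ext (by simp only [Fin.val_mk]; omega)
          rw [hik2]
          exact hblock (tt k)
        · have hki' : (i : ℕ) < k := by omega
          rcases hreach _ hce _ htail with h0 | ⟨e', he', hqe⟩
          · cases h0
          · rcases head_q_classify (hEC he') hqe with
              ⟨v, b, rfl, -⟩ | ⟨i', j', rfl, hx⟩ | ⟨rfl, hx⟩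
            · exact finish_contra φ H' hmin hforced hfull tt k hkm hchain v b he' hqe
            · simp only [Fin.val_mk] at hx
              refine ihk (k - 1) (by omega) (by omega) (by omega)
                (fun k'' => if k'' = k - 1 then j' else tt k'') ?_
              intro k' hk1 h'
              by_cases hkk : k' = k - 1
              · subst hkk
                have hj : (fun k'' => if k'' = k - 1 then j' else tt k'') (k - 1) = j' := by
                  simp
                rw [show (if k - 1 = k - 1 then j' else tt (k - 1)) = j' from hj]
                have hi' : i' = ⟨k - 1, h'⟩ := Fin.ext (by simp only [Fin.val_mk]; omega)
                rw [← hi']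
                exact he'
              · have hj : (fun k'' => if k'' = k - 1 then j' else tt k'') k' = tt k' := by
                  simp [hkk]
                rw [show (if k' = k - 1 then j' else tt k') = tt k' from hj]
                exact hchain k' (by omega) h'
            · simp only [Fin.val_mk] at hx
              omega
    obtain ⟨e, heK, hf⟩ := hasOrdering_last hord
    rcases head_f_classify (hEC heK) hf with ⟨i', j', rfl, hi'⟩ | ⟨rfl, hm0⟩
    · refine main (m - 1) (by have := i.isLt; omega) (by omega) (fun _ => j') ?_
      intro k' h1 h'
      have hk' : k' = m - 1 := by omega
      subst hk'
      have hi'' : i' = ⟨m - 1, h'⟩ := Fin.ext (by simp only [Fin.val_mk]; have := i'.isLt; omega)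
      rw [← hi'']
      exact heK
    · omega
  · rintro ⟨σ, hsat⟩
    set t : ℕ → Fin 3 := fun k => if h : k < m then (hsat ⟨k, h⟩).choose else 0 with hT
    have ht : ∀ k (h : k < m), σ (φ ⟨k, h⟩ (t k)).1 = (φ ⟨k, h⟩ (t k)).2 := by
      intro k h
      simp only [hT, dif_pos h]
      exact (hsat ⟨k, h⟩).choose_spec
    set E0 : Finset (Finset (Vtx n m) × Finset (Vtx n m)) :=
      Finset.univ.image (fun v : Fin n => varEdge φ v (σ v)) with hE0
    have hE0mem : ∀ v : Fin n, varEdge φ v (σ v) ∈ E0 := by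
      intro v
      rw [hE0]
      exact Finset.mem_image_of_mem _ (Finset.mem_univ v)
    have hE0mem' : ∀ e ∈ E0, ∃ v : Fin n, e = varEdge φ v (σ v) := by
      intro e he
      rw [hE0] at he
      simp only [Finset.mem_image, Finset.mem_univ, true_and] at he
      obtain ⟨v, hv⟩ := he
      exact ⟨v, hv.symm⟩
    have hfull : ∀ v : Fin n, ∃ b, varEdge φ v b ∈ E0 := fun v => ⟨σ v, hE0mem v⟩
    set L : List (Finset (Vtx n m) × Finset (Vtx n m)) :=
      varListE φ E0 n ++ ([forcedEdge n m, q0Edge n m] ++ clauseListT n m t 0 m) with hL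
    have hLmem : ∀ e, e ∈ L ↔ ((∃ v : Fin n, e = varEdge φ v (σ v)) ∨ e = forcedEdge n m ∨
        e = q0Edge n m ∨ ∃ (k : ℕ) (h : k < m), e = clauseEdge ⟨k, h⟩ (t k)) := by
      intro e
      rw [hL]
      simp only [List.mem_append, List.mem_cons, List.not_mem_nil, or_false]
      constructor
      · rintro (hv | (rfl | rfl) | hc)
        · obtain ⟨v, -, hs, hE⟩ := mem_varListE.1 hv
          obtain ⟨v', hv'⟩ := hE0mem' e hE
          exact Or.inl ⟨v', hv'⟩
        · exact Or.inr (Or.inl rfl)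
        · exact Or.inr (Or.inr (Or.inl rfl))
        · obtain ⟨k, hk, -, -, rfl⟩ := mem_clauseListT.1 hc
          exact Or.inr (Or.inr (Or.inr ⟨k, hk, rfl⟩))
      · rintro (⟨v, rfl⟩ | rfl | rfl | ⟨k, hk, rfl⟩)
        · refine Or.inl (mem_varListE.2 ⟨v, v.isLt, ?_, hE0mem v⟩)
          rcases hb : σ v with _ | _
          · exact Or.inl (by rw [← hb])
          · exact Or.inr (by rw [← hb])
        · exact Or.inr (Or.inl (Or.inl rfl))
        · exact Or.inr (Or.inl (Or.inr rfl))
        · exact Or.inr (Or.inr (mem_clauseListT.2 ⟨k, hk, by omega, by omega, rfl⟩))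
    have hLC : ∀ e ∈ L, e ∈ (Cphi φ).edges := by
      intro e he
      rcases (hLmem e).1 he with ⟨v, rfl⟩ | rfl | rfl | ⟨k, hk, rfl⟩
      · exact mem_Cphi_edges.2 (Or.inl ⟨v, σ v, rfl⟩)
      · exact mem_Cphi_edges.2 (Or.inr (Or.inr (Or.inl rfl)))
      · exact mem_Cphi_edges.2 (Or.inr (Or.inr (Or.inr rfl)))
      · exact mem_Cphi_edges.2 (Or.inr (Or.inl ⟨_, _, rfl⟩))
    set H' : DiHypergraph (Vtx n m) := {
      verts := Finset.univ
      edges := L.toFinset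
      tail_sub := fun e _ => Finset.subset_univ _
      head_sub := fun e _ => Finset.subset_univ _
      disj := fun e he => (Cphi φ).disj e (hLC e (List.mem_toFinset.1 he)) } with hH'
    have hnd : L.Nodup := by
      rw [hL]
      refine List.nodup_append.2 ⟨nodup_varListE, ?_, ?_⟩
      · refine List.nodup_append.2 ⟨?_, nodup_clauseListT _ _, ?_⟩
        · simp [forcedEdge_ne_q0Edge]
        · rintro e he _ he' rfl
          obtain ⟨k, hk, -, -, rfl⟩ := mem_clauseListT.1 he'
          simp only [List.mem_cons, List.not_mem_nil, or_false] at he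
          rcases he with h | h
          exacts [clauseEdge_ne_forcedEdge h, clauseEdge_ne_q0Edge h]
      · rintro e he _ he' rfl
        obtain ⟨v, -, hs, -⟩ := mem_varListE.1 he
        simp only [List.mem_append, List.mem_cons, List.not_mem_nil, or_false] at he'
        rcases he' with (h | h) | h
        · rcases hs with rfl | rfl <;> exact varEdge_ne_forcedEdge h
        · rcases hs with rfl | rfl <;> exact varEdge_ne_q0Edge h
        · obtain ⟨k, hk, -, -, h2⟩ := mem_clauseListT.1 h
          rcases hs with rfl | rfl <;> exact varEdge_ne_clauseEdge h2
    have hordH : HasOrdering H' (Vtx.p 0) Vtx.f := by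
      refine hasOrdering_of H' _ _ L hnd rfl ?_ ?_
      · rw [hL]
        refine Valid.append (valid_varListE hfull n) ?_
        refine Valid.append ?_ ?_
        · refine ⟨?_, ?_, trivial⟩
          · rw [show (forcedEdge n m).1 = {Vtx.p (Fin.last n)} from rfl,
              Finset.singleton_subset_iff]
            exact p_mem_insert_headsUnion_varListE hfull (by simp [Fin.last])
          · rw [show (q0Edge n m).1 = {Vtx.q0} from rfl, Finset.singleton_subset_iff]
            exact Finset.mem_union_right _ (mem_forcedEdge_head.2 rfl)
        · refine valid_clauseListT _ _ _ ?_
          intro h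
          refine Finset.mem_union_right _ (Finset.mem_union_right _ (Finset.mem_union_left _ ?_))
          exact q_mem_q0Edge_head.2 rfl
      · rcases Nat.eq_zero_or_pos m with hm0 | hm0
        · subst hm0
          refine ⟨q0Edge n 0, ?_, f_mem_q0Edge_head.2 rfl⟩
          rw [hL, show clauseListT n 0 t 0 0 = [] from rfl, List.append_nil,
            List.getLast?_append_of_ne_nil _ (by simp)]
          rfl
        · obtain ⟨hm1, hlast⟩ := getLast?_clauseListT m 0 hm0 (by omega)
          refine ⟨clauseEdge ⟨m - 1, hm1⟩ (t (m - 1)), ?_,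
            f_mem_nextQ.2 (by simp only [Fin.val_mk]; omega)⟩
          have hne : clauseListT n m t 0 m ≠ [] := by
            intro h
            rw [h] at hlast
            simp at hlast
          rw [hL, List.getLast?_append_of_ne_nil _ (by simp [hne]),
            List.getLast?_append_of_ne_nil _ hne]
          exact hlast
    have hmin : ∀ K : DiHypergraph (Vtx n m), Subhg K H' → HasOrdering K (Vtx.p 0) Vtx.f →
        K = H' := by
      intro K hKsub hkord
      obtain ⟨hkv, hke⟩ := hKsub
      have hkreach := hasOrdering_reach hkord
      have hkH : ∀ e ∈ K.edges, e ∈ L := fun e he => List.mem_toFinset.1 (hke he)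
      have hq_head : ∀ e ∈ K.edges, ∀ (x : Fin m) (y : Fin 3), Vtx.q x y ∈ e.2 →
          (σ (φ x y).1 ≠ (φ x y).2) ∨
          (∃ (k : ℕ) (h : k < m), e = clauseEdge ⟨k, h⟩ (t k) ∧ (x : ℕ) = k + 1) ∨
          (e = q0Edge n m ∧ (x : ℕ) = 0) := by
        intro e he x y hxy
        rcases (hLmem e).1 (hkH e he) with ⟨v, rfl⟩ | rfl | rfl | ⟨k, hk, rfl⟩
        · left
          have hv := q_mem_varEdge_head.1 hxy
          rw [hv]
          simp
        · exact absurd (mem_forcedEdge_head.1 hxy) (by simp)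
        · exact Or.inr (Or.inr ⟨rfl, q_mem_q0Edge_head.1 hxy⟩)
        · exact Or.inr (Or.inl ⟨k, hk, rfl, q_mem_nextQ.1 hxy⟩)
      have hclauses : ∀ d k, k + d + 1 = m → ∀ h : k < m,
          clauseEdge (n := n) ⟨k, h⟩ (t k) ∈ K.edges := by
        intro d
        induction d with
        | zero =>
          intro k hk h
          obtain ⟨e, heK, hf⟩ := hasOrdering_last hkord
          rcases (hLmem e).1 (hkH e heK) with ⟨v, rfl⟩ | rfl | rfl | ⟨k', hk', rfl⟩
          · exact absurd hf f_not_mem_varEdge_head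
          · exact absurd (mem_forcedEdge_head.1 hf) (by simp)
          · exact absurd (f_mem_q0Edge_head.1 hf) (by omega)
          · have hf' := f_mem_nextQ.1 hf
            simp only [Fin.val_mk] at hf'
            have hkk : k' = k := by omega
            subst hkk
            exact heK
        | succ d ih =>
          intro k hk h
          have e1 : (k + 1) + d + 1 = m := by omega
          have e2 : k + 1 < m := by omega
          have hnext := ih (k + 1) e1 e2
          have htail : Vtx.q ⟨k + 1, e2⟩ (t (k + 1)) ∈
              (clauseEdge (n := n) ⟨k + 1, e2⟩ (t (k + 1))).1 := by
            rw [clauseEdge_fst]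
            exact Finset.mem_singleton_self _
          rcases hkreach _ hnext _ htail with h0 | ⟨e', he', hqe⟩
          · cases h0
          · rcases hq_head e' he' _ _ hqe with hn | ⟨k', hk', rfl, hx⟩ | ⟨rfl, hx⟩
            · exact absurd (ht (k + 1) (by omega)) hn
            · simp only [Fin.val_mk] at hx
              have hkk : k' = k := by omega
              subst hkk
              exact he'
            · simp only [Fin.val_mk] at hx
              omega
      have hq0K : q0Edge n m ∈ K.edges := by
        rcases Nat.eq_zero_or_pos m with hm0 | hm0
        · obtain ⟨e, heK, hf⟩ := hasOrdering_last hkord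
          rcases (hLmem e).1 (hkH e heK) with ⟨v, rfl⟩ | rfl | rfl | ⟨k', hk', rfl⟩
          · exact absurd hf f_not_mem_varEdge_head
          · exact absurd (mem_forcedEdge_head.1 hf) (by simp)
          · exact heK
          · omega
        · have e1 : 0 + (m - 1) + 1 = m := by omega
          have h0 := hclauses (m - 1) 0 e1 hm0
          have htail : Vtx.q ⟨0, hm0⟩ (t 0) ∈
              (clauseEdge (n := n) ⟨0, hm0⟩ (t 0)).1 := by
            rw [clauseEdge_fst]
            exact Finset.mem_singleton_self _
          rcases hkreach _ h0 _ htail with hc | ⟨e', he', hqe⟩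
          · cases hc
          · rcases hq_head e' he' _ _ hqe with hn | ⟨k', hk', rfl, hx⟩ | ⟨rfl, -⟩
            · exact absurd (ht 0 hm0) hn
            · simp only [Fin.val_mk] at hx
              omega
            · exact he'
      have hfK : forcedEdge n m ∈ K.edges := by
        have htail : (Vtx.q0 : Vtx n m) ∈ (q0Edge n m).1 := by
          rw [show (q0Edge n m).1 = {Vtx.q0} from rfl]
          exact Finset.mem_singleton_self _
        rcases hkreach _ hq0K _ htail with hc | ⟨e', he', hqe⟩
        · cases hc
        · rcases (hLmem e').1 (hkH e' he') with ⟨v, rfl⟩ | rfl | rfl | ⟨k', hk', rfl⟩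
          · exact absurd hqe q0_not_mem_varEdge_head
          · exact he'
          · exact absurd hqe q0_not_mem_q0Edge_head
          · exact absurd hqe q0_not_mem_nextQ
      have hvarsK : ∀ d k (h : k < n), k + d + 1 = n →
          varEdge φ ⟨k, h⟩ (σ ⟨k, h⟩) ∈ K.edges := by
        intro d
        induction d with
        | zero =>
          intro k h hk
          have htail : Vtx.p (Fin.last n) ∈ (forcedEdge n m).1 := by simp [forcedEdge]
          rcases hkreach _ hfK _ htail with h0 | ⟨e', he', hpe⟩
          · injection h0 with h0'
            have := congrArg Fin.val h0'
            simp [Fin.last] at this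
            omega
          · rcases (hLmem e').1 (hkH e' he') with ⟨v, rfl⟩ | rfl | rfl | ⟨k', hk', rfl⟩
            · have hw := p_mem_varEdge_head.1 hpe
              have hv : v = ⟨k, h⟩ := by
                have h2 := congrArg Fin.val hw
                simp [Fin.last, Fin.val_succ] at h2
                exact Fin.ext (by simp only [Fin.val_mk]; omega)
              exact hv ▸ he'
            · exact absurd (mem_forcedEdge_head.1 hpe) (by simp)
            · exact absurd hpe p_not_mem_q0Edge_head
            · exact absurd hpe p_not_mem_nextQ
        | succ d ih =>
          intro k h hk
          have hb := ih (k + 1) (by omega) (by omega)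
          have htail : Vtx.p ((⟨k + 1, by omega⟩ : Fin n).castSucc) ∈
              (varEdge φ ⟨k + 1, by omega⟩ (σ ⟨k + 1, by omega⟩)).1 := by
            rw [varEdge_fst]
            exact Finset.mem_singleton_self _
          rcases hkreach _ hb _ htail with h0 | ⟨e', he', hpe⟩
          · injection h0 with h0'
            have := congrArg Fin.val h0'
            simp at this
          · rcases (hLmem e').1 (hkH e' he') with ⟨v, rfl⟩ | rfl | rfl | ⟨k', hk', rfl⟩
            · have hw := p_mem_varEdge_head.1 hpe
              have hv : v = ⟨k, h⟩ := by
                have h2 := congrArg Fin.val hw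
                simp [Fin.val_succ] at h2
                exact Fin.ext (by simp only [Fin.val_mk]; omega)
              exact hv ▸ he'
            · exact absurd (mem_forcedEdge_head.1 hpe) (by simp)
            · exact absurd hpe p_not_mem_q0Edge_head
            · exact absurd hpe p_not_mem_nextQ
      have hedges : K.edges = H'.edges := by
        refine Finset.Subset.antisymm hke ?_
        intro e he
        rcases (hLmem e).1 (List.mem_toFinset.1 he) with ⟨v, rfl⟩ | rfl | rfl | ⟨k, hk, rfl⟩
        · have := hvarsK (n - (v : ℕ) - 1) (v : ℕ) v.isLt (by have := v.isLt; omega)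
          rwa [Fin.eta] at this
        · exact hfK
        · exact hq0K
        · exact hclauses (m - k - 1) k (by omega) hk
      have hverts : K.verts = H'.verts := by
        refine Finset.Subset.antisymm hkv ?_
        intro x hx
        clear hx
        cases x with
        | p w =>
          by_cases hw : (w : ℕ) < n
          · have he : varEdge φ ⟨(w : ℕ), hw⟩ (σ ⟨(w : ℕ), hw⟩) ∈ K.edges := by
              rw [hedges]
              exact List.mem_toFinset.2 ((hLmem _).2 (Or.inl ⟨_, rfl⟩))
            refine K.tail_sub _ he ?_
            rw [varEdge_fst, Finset.mem_singleton]
            congr 1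
          · have hlast : w = Fin.last n := Fin.ext (by have := w.isLt; simp [Fin.last]; omega)
            refine K.tail_sub _ (by
              rw [hedges]
              exact List.mem_toFinset.2 ((hLmem _).2 (Or.inr (Or.inl rfl)))) ?_
            rw [hlast]
            simp [forcedEdge]
        | q0 =>
          refine K.head_sub _ (by
            rw [hedges]
            exact List.mem_toFinset.2 ((hLmem _).2 (Or.inr (Or.inl rfl)))) ?_
          simp [forcedEdge]
        | q k j =>
          rcases Nat.eq_zero_or_pos (k : ℕ) with hk0 | hk0
          · refine K.head_sub _ (by
              rw [hedges]
              exact List.mem_toFinset.2 ((hLmem _).2 (Or.inr (Or.inr (Or.inl rfl))))) ?_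
            exact q_mem_q0Edge_head.2 hk0
          · have hkm : (k : ℕ) - 1 < m := by have := k.isLt; omega
            have he : clauseEdge (n := n) ⟨(k : ℕ) - 1, hkm⟩ (t ((k : ℕ) - 1)) ∈ K.edges := by
              rw [hedges]
              exact List.mem_toFinset.2 ((hLmem _).2 (Or.inr (Or.inr (Or.inr ⟨_, hkm, rfl⟩))))
            refine K.head_sub _ he ?_
            exact q_mem_nextQ.2 (by simp only [Fin.val_mk]; omega)
        | f =>
          rcases Nat.eq_zero_or_pos m with hm0 | hm0
          · refine K.head_sub _ (by
              rw [hedges]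
              exact List.mem_toFinset.2 ((hLmem _).2 (Or.inr (Or.inr (Or.inl rfl))))) ?_
            exact f_mem_q0Edge_head.2 hm0
          · have hkm : m - 1 < m := by omega
            have he : clauseEdge (n := n) ⟨m - 1, hkm⟩ (t (m - 1)) ∈ K.edges := by
              rw [hedges]
              exact List.mem_toFinset.2 ((hLmem _).2 (Or.inr (Or.inr (Or.inr ⟨_, hkm, rfl⟩))))
            refine K.head_sub _ he ?_
            exact f_mem_nextQ.2 (by simp only [Fin.val_mk]; omega)
      exact DiHypergraph.ext' hverts hedges
    refine ⟨H', ⟨⟨Finset.subset_univ _, ?_⟩, hordH, hmin⟩, ?_⟩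
    · intro e he
      exact hLC e (List.mem_toFinset.1 he)
    · exact List.mem_toFinset.2 ((hLmem _).2 (Or.inr (Or.inl rfl)))
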